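/- Let k be an algebraically closed field of characteristic p > 0 and let r ≥ 1. For every sequence (M_n)_{n≥0} with M_n ∈ B_r(k((t))^{p^n}) there exists a sequence (A_n)_{n≥0} with A_n ∈ B_r(k[t,t⁻¹]^{p^n}) such that: (i) there exist g_n ∈ B_r(k((t))^{p^n}) with M_n = g_n · A_n · g_{n+1}⁻¹ in GL_r(k((t))) for all n; and (ii) there exist h_n ∈ B_r(k((s))^{p^n}) and invertible diagonal r×r matrices Δ_n with entries in k((s))^{p^n} such that ι(A_n) = h_n · Δ_n · h_{n+1}⁻¹ in GL_r(k((s))) for all n. (This is the key surjectivity statement: every stratified bundle on k((t)) extends to a stratified bundle on 𝔾_m which, over k((t⁻¹)), is a direct sum of rank-one objects, i.e., whose class lies in the image of the diagonal section.) -/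

import Mathlib

/-- The element `t` of `k((t))`; the same element serves as `s` when the Laurent series
field models `k((t⁻¹)) = k((s))`, `t = s⁻¹`. -/
noncomputable def tt (k : Type*) [Field k] : LaurentSeries k := HahnSeries.single 1 1

/-- `M ∈ B_r(k((t))^{pⁿ})`: an upper-triangular matrix whose entries lie in the subring
`k((t))^{pⁿ}` (support consisting of multiples of `pⁿ`) and whose diagonal entries are
units of `k((t))^{pⁿ}` (equivalently, nonzero, since `k((t))^{pⁿ}` is a subfield). -/
def MemBrLaurentSeriesPow (k : Type*) [Field k] (p n r : ℕ)
    (M : Matrix (Fin r) (Fin r) (LaurentSeries k)) : Prop :=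
  (∀ i j : Fin r, (j : ℕ) < (i : ℕ) → M i j = 0) ∧
  (∀ i j : Fin r, ∀ m ∈ (M i j).support, ((p : ℤ) ^ n) ∣ m) ∧
  (∀ i : Fin r, M i i ≠ 0)

/-- `M ∈ B_r(k[t,t⁻¹]^{pⁿ})`: an upper-triangular matrix whose entries are Laurent
polynomials (finite support) with support consisting of multiples of `pⁿ`, and whose
diagonal entries are units of the subring `k[t,t⁻¹]^{pⁿ}`. -/
def MemBrLaurentPolyPow (k : Type*) [Field k] (p n r : ℕ)
    (M : Matrix (Fin r) (Fin r) (LaurentSeries k)) : Prop :=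
  (∀ i j : Fin r, (j : ℕ) < (i : ℕ) → M i j = 0) ∧
  (∀ i j : Fin r, (M i j).support.Finite ∧ ∀ m ∈ (M i j).support, ((p : ℤ) ^ n) ∣ m) ∧
  (∀ i : Fin r, ∃ g : LaurentSeries k,
      g.support.Finite ∧ (∀ m ∈ g.support, ((p : ℤ) ^ n) ∣ m) ∧ M i i * g = 1)

/-- `A'` is obtained from `A` by applying, entrywise, the embedding
`ι : k[t,t⁻¹] → k((s))`, `t ↦ s⁻¹` (coefficientwise reversal). -/
def IsRevMatSeq (k : Type*) [Field k] (r : ℕ)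
    (A A' : ℕ → Matrix (Fin r) (Fin r) (LaurentSeries k)) : Prop :=
  ∀ n (i j : Fin r) (m : ℤ), (A' n i j).coeff m = (A n i j).coeff (-m)

/-!
On the diagonal, a nonzero `α ∈ k((t))^{pⁿ}` factors as `c tᵇ u` with `u ∈ 1 + tᵖⁿ k⟦tᵖⁿ⟧`;
the tail products `γₙ = ∏_{m ≥ n} uₘ` converge because the orders `pᵐ` grow, and
`αₙ = γₙ (cₙ tᵇⁿ) γₙ₊₁⁻¹`. Above the diagonal, entries are normalized one at a time, by
conjugating with transvections simultaneously over `k((t))` and over `k((s))`, `s = t⁻¹`. After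
twisting by monomials, one entry amounts to a telescoping equation `Wₙ - Wₙ₊₁ = Yₙ`, which is
solvable as long as `Yₙ` has no coefficients at negative exponents, except at the (at most one)
exponent lying in the relevant residue class modulo every `pⁿ`. A Laurent polynomial removes the
offending coefficients on the `t`-side and, reflected, on the `s`-side; it becomes the entry of `A`.
-/

open HahnSeries Filter Finset

namespace LaurentSeries

variable {k : Type*} [Field k]

/-- For `P = pⁿ` in characteristic `p` this is `k((t))^{pⁿ}`. -/
def levelSubring (k : Type*) [Field k] (P : ℤ) : Subring (LaurentSeries k) where
  carrier := {x | ∀ m ∈ x.support, P ∣ m}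
  mul_mem' {x y} hx hy m hm := by
    obtain ⟨a, ha, b, hb, rfl⟩ := support_mul_subset hm
    exact dvd_add (hx a ha) (hy b hb)
  one_mem' m hm := by
    rw [support_one, Set.mem_singleton_iff] at hm
    exact hm ▸ dvd_zero P
  add_mem' {x y} hx hy m hm := (support_add_subset x y hm).elim (hx m) (hy m)
  zero_mem' m hm := by simp at hm
  neg_mem' {x} hx m hm := hx m (by rwa [support_neg] at hm)

theorem single_mem_levelSubring {P s : ℤ} (hs : P ∣ s) (c : k) :
    single s c ∈ levelSubring k P := fun _ hm => eq_of_mem_support_single hm ▸ hs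

theorem levelSubring_mono {P Q : ℤ} (h : Q ∣ P) : levelSubring k P ≤ levelSubring k Q :=
  fun _ hx m hm => h.trans (hx m hm)

/-- Scaling exponents by `P` maps `k((t))` isomorphically onto the level-`P` subring. -/
theorem inv_mem_levelSubring {P : ℤ} (hP : 0 < P) {x : LaurentSeries k}
    (hx : x ∈ levelSubring k P) : x⁻¹ ∈ levelSubring k P := by
  let E := embDomainRingHom (R := k) (AddMonoidHom.mulRight P)
    (mul_left_injective₀ hP.ne') (fun _ _ => mul_le_mul_iff_of_pos_right hP)
  have hE : ∀ y, E y ∈ levelSubring k P := fun y m hm => by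
    by_contra h
    exact hm (embDomain_of_notMem_range fun ⟨q, hq⟩ => h ⟨q, hq ▸ mul_comm q P⟩)
  obtain ⟨y, rfl⟩ : ∃ y, E y = x := by
    have hbdd : BddBelow (Function.support fun q => x.coeff (q * P)) := by
      refine ⟨-|x.order|, fun q hq => ?_⟩
      have := order_le_of_coeff_ne_zero hq
      by_contra! hlt
      have hq0 : q < 0 := by linarith [abs_nonneg x.order]
      nlinarith [neg_abs_le x.order, mul_le_mul_of_nonpos_left (show 1 ≤ P by omega) hq0.le]
    refine ⟨⟨fun q => x.coeff (q * P), hbdd.isWF.isPWO⟩, ?_⟩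
    ext m
    by_cases hm : P ∣ m
    · obtain ⟨q, rfl⟩ := hm
      rw [mul_comm]
      exact embDomain_coeff (a := q)
    · change (embDomain _ _).coeff m = _
      rw [embDomain_of_notMem_range, eq_comm]
      · by_contra h
        exact hm (hx m h)
      · rintro ⟨q, rfl⟩; exact hm ⟨q, mul_comm q P⟩
  rw [← map_inv₀]
  exact hE _

open PowerSeries

theorem coe_mem_levelSubring_iff {P : ℤ} {f : k⟦X⟧} :
    (f : k⸨X⸩) ∈ levelSubring k P ↔ ∀ m : ℕ, coeff m f ≠ 0 → P ∣ m := by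
  refine ⟨fun h m hm => h m (by rwa [mem_support, coeff_coe_powerSeries]), fun h m hm => ?_⟩
  rw [mem_support, coeff_coe] at hm
  split_ifs at hm with hneg
  · exact absurd rfl hm
  · simpa [Int.natAbs_of_nonneg (not_lt.mp hneg)] using h _ hm

open WithPiTopology in
/-- For `uₙ ∈ 1 + Xᵖⁿ k⟦Xᵖⁿ⟧` the tail products `γₙ = ∏_{m ≥ n} uₘ` converge coefficientwise. -/
theorem exists_eq_mul_succ_of_mem_levelSubring {p : ℕ} (hp : 1 < p) (u : ℕ → k⟦X⟧)
    (hu₀ : ∀ n, constantCoeff (u n) = 1) (hu : ∀ n, (u n : k⸨X⸩) ∈ levelSubring k (p ^ n)) :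
    ∃ γ : ℕ → k⟦X⟧, ∀ n, constantCoeff (γ n) = 1 ∧ (γ n : k⸨X⸩) ∈ levelSubring k (p ^ n) ∧
      γ n = u n * γ (n + 1) := by
  let _ : TopologicalSpace k := ⊥
  have : DiscreteTopology k := ⟨rfl⟩
  have hord : ∀ n, ((p ^ n : ℕ) : ℕ∞) ≤ (u n - 1).order := fun n =>
    nat_le_order _ _ fun i hi => by
      rcases Nat.eq_zero_or_pos i with rfl | hi0
      · simp [hu₀]
      · rw [map_sub, PowerSeries.coeff_one, if_neg hi0.ne', sub_zero]
        by_contra h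
        have := coe_mem_levelSubring_iff.mp (hu n) i h
        exact absurd (Nat.le_of_dvd hi0 (by exact_mod_cast this)) (not_le.mpr hi)
  have hmult : ∀ n, Multipliable fun m => u (n + m) := fun n => by
    refine (multipliable_one_add_of_tendsto_order_atTop_nhds_top k (f := fun m => u (n + m) - 1)
      (ENat.tendsto_nhds_top_iff_natCast_lt.mpr fun N => eventually_atTop.mpr
        ⟨N, fun m hm => lt_of_lt_of_le ?_ (hord (n + m))⟩)).congr fun m => add_sub_cancel _ _
    exact_mod_cast (show N < p ^ (n + m) by
      have := Nat.lt_pow_self (n := n + m) hp; omega)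
  refine ⟨fun n => ∏' m, u (n + m), fun n => ⟨?_, ?_, ?_⟩⟩
  · rw [(hmult n).map_tprod _ (continuous_constantCoeff k)]
    simp [hu₀]
  · have hclosed : IsClosed ((levelSubring k (p ^ n)).comap (ofPowerSeries ℤ k) : Set k⟦X⟧) := by
      have : ((levelSubring k (p ^ n)).comap (ofPowerSeries ℤ k) : Set k⟦X⟧) =
          ⋂ m : ℕ, PowerSeries.coeff m ⁻¹' {c | c ≠ 0 → (p : ℤ) ^ n ∣ m} := by
        ext f
        simpa using coe_mem_levelSubring_iff
      rw [this]
      exact isClosed_iInter fun m => (isClosed_discrete _).preimage (continuous_coeff k m)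
    have hmem : ∀ m, u (n + m) ∈ (levelSubring k (p ^ n)).comap (ofPowerSeries ℤ k) := fun m =>
      levelSubring_mono (by exact_mod_cast pow_dvd_pow p (Nat.le_add_right n m)) (hu _)
    exact tprod_mem hclosed hmem
  · show ∏' m, u (n + m) = u n * ∏' m, u (n + 1 + m)
    rw [tprod_eq_zero_mul' (f := fun m => u (n + m))
      ((hmult (n + 1)).congr fun m => congrArg u (by omega)), add_zero]
    exact congrArg _ (tprod_congr fun m => congrArg u (by omega))

theorem exists_gauge_eq_single {p : ℕ} (hp : 1 < p) (α : ℕ → k⸨X⸩) (hα : ∀ n, α n ≠ 0)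
    (hlev : ∀ n, α n ∈ levelSubring k (p ^ n)) :
    ∃ (γ : ℕ → k⸨X⸩) (b : ℕ → ℤ) (c : ℕ → k), ∀ n, γ n ≠ 0 ∧ γ n ∈ levelSubring k (p ^ n) ∧
      (p : ℤ) ^ n ∣ b n ∧ c n ≠ 0 ∧ α n * γ (n + 1) = γ n * single (b n) (c n) := by
  set b := fun n => (α n).order
  set c := fun n => (α n).coeff (b n)
  have hc : ∀ n, c n ≠ 0 := fun n => coeff_order_eq_zero.not.mpr (hα n)
  have hb : ∀ n, (p : ℤ) ^ n ∣ b n := fun n => hlev n _ (hc n)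
  set u := fun n => PowerSeries.C (c n)⁻¹ * (α n).powerSeriesPart
  have hαu : ∀ n, α n = single (b n) (c n) * (u n : k⸨X⸩) := fun n => by
    rw [PowerSeries.coe_mul, coe_C, HahnSeries.C_apply, ← mul_assoc, single_mul_single, add_zero,
      mul_inv_cancel₀ (hc n), single_order_mul_powerSeriesPart]
  have hu : ∀ n, (u n : k⸨X⸩) ∈ levelSubring k (p ^ n) := fun n => by
    have : (u n : k⸨X⸩) = single (-b n) (c n)⁻¹ * α n := by
      rw [hαu n, ← mul_assoc, single_mul_single, neg_add_cancel, inv_mul_cancel₀ (hc n),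
        single_zero_one, one_mul]
    rw [this]
    exact mul_mem (single_mem_levelSubring (dvd_neg.mpr (hb n)) _) (hlev n)
  have hu₀ : ∀ n, PowerSeries.constantCoeff (u n) = 1 := fun n => by
    simp [u, ← PowerSeries.coeff_zero_eq_constantCoeff_apply, inv_mul_cancel₀ (hc n), c, b]
  obtain ⟨γ, hγ⟩ := exists_eq_mul_succ_of_mem_levelSubring hp u hu₀ hu
  refine ⟨fun n => γ n, b, c, fun n => ⟨?_, (hγ n).2.1, hb n, hc n, ?_⟩⟩
  · intro h
    have := (hγ n).1
    rw [← PowerSeries.coeff_zero_eq_constantCoeff_apply, ← coeff_coe_powerSeries] at this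
    simp [show (γ n : k⸨X⸩) = 0 from h] at this
  · rw [hαu n, mul_assoc, ← PowerSeries.coe_mul, ← (hγ n).2.2, mul_comm]

section Telescoping

variable {p : ℕ} {T : ℕ → ℤ}

theorem pow_dvd_sub_of_le (hT : ∀ n, (p : ℤ) ^ n ∣ T (n + 1) - T n) {n m : ℕ} (h : n ≤ m) :
    (p : ℤ) ^ n ∣ T m - T n := by
  induction m, h using Nat.le_induction with
  | base => simp
  | succ m hnm ih =>
    simpa using dvd_add ((pow_dvd_pow (p : ℤ) hnm).trans (hT m)) ih

theorem pow_dvd_add_of_le (hT : ∀ n, (p : ℤ) ^ n ∣ T (n + 1) - T n) {q : ℤ} {n m : ℕ}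
    (h : n ≤ m) (hq : (p : ℤ) ^ m ∣ q + T m) : (p : ℤ) ^ n ∣ q + T n := by
  have := dvd_sub ((pow_dvd_pow (p : ℤ) h).trans hq) (pow_dvd_sub_of_le hT h)
  rwa [show q + T m - (T m - T n) = q + T n by ring] at this

theorem subsingleton_setOf_forall_pow_dvd (hp : 1 < p) :
    {q : ℤ | ∀ m, (p : ℤ) ^ m ∣ q + T m}.Subsingleton := by
  intro q₁ h₁ q₂ h₂
  set d := (q₁ - q₂).natAbs
  have hd : |q₁ - q₂| < (p : ℤ) ^ d := by
    rw [Int.abs_eq_natAbs]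
    exact_mod_cast Nat.lt_pow_self hp
  exact sub_eq_zero.mp (Int.eq_zero_of_abs_lt_dvd (by simpa using dvd_sub (h₁ d) (h₂ d)) hd)

/-- Away from the exceptional exponent (the set `E` below), `Wₙ = ∑_{m ≥ n} Yₘ` is
coefficientwise a finite sum; at the exceptional exponent take `Wₙ = -∑_{m < n} Yₘ` instead. -/
theorem exists_sub_succ_eq (hp : 1 < p) (hT : ∀ n, (p : ℤ) ^ n ∣ T (n + 1) - T n)
    (Y : ℕ → k⸨X⸩) (hY : ∀ n, ∀ q ∈ (Y n).support, (p : ℤ) ^ n ∣ q + T n)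
    (hneg : ∀ n q, q < 0 → (∃ m, ¬ (p : ℤ) ^ m ∣ q + T m) → (Y n).coeff q = 0) :
    ∃ W : ℕ → k⸨X⸩, ∀ n, W n - W (n + 1) = Y n ∧ ∀ q ∈ (W n).support, (p : ℤ) ^ n ∣ q + T n := by
  classical
  set E := {q : ℤ | ∀ m, (p : ℤ) ^ m ∣ q + T m}
  let N : ℤ → ℕ := fun q => if h : ∃ m, ¬ (p : ℤ) ^ m ∣ q + T m then Nat.find h else 0
  have hN : ∀ q ∉ E, ∀ m, N q ≤ m → (Y m).coeff q = 0 := fun q hq m hm => by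
    have h : ∃ m, ¬ (p : ℤ) ^ m ∣ q + T m := by simpa [E] using hq
    by_contra hY0
    have hNq : N q = Nat.find h := dif_pos h
    exact Nat.find_spec h (pow_dvd_add_of_le hT (hNq ▸ hm) (hY m q hY0))
  let w : ℕ → ℤ → k := fun n q =>
    if q ∈ E then -∑ m ∈ range n, (Y m).coeff q else ∑ m ∈ Ico n (N q), (Y m).coeff q
  have hw : ∀ n, Function.support (w n) ⊆ E ∪ Set.Ici 0 := fun n q hq => by
    by_contra h
    simp only [Set.mem_union, Set.mem_Ici, not_or, not_le] at h
    refine hq ?_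
    simp only [w, if_neg h.1]
    exact sum_eq_zero fun m _ => hneg m q h.2 (by simpa [E] using h.1)
  have hbdd : ∀ n, BddBelow (Function.support (w n)) := fun n =>
    ((subsingleton_setOf_forall_pow_dvd hp).finite.bddBelow.union bddBelow_Ici).mono (hw n)
  refine ⟨fun n => ⟨w n, (hbdd n).isWF.isPWO⟩, fun n => ⟨?_, fun q hq => ?_⟩⟩
  · ext q
    change w n q - w (n + 1) q = _
    by_cases hq : q ∈ E
    · simp only [w, if_pos hq, sum_range_succ]
      ring
    · simp only [w, if_neg hq]
      rcases lt_or_ge n (N q) with h | h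
      · rw [sum_eq_sum_Ico_succ_bot h]
        ring
      · rw [Ico_eq_empty (by omega), Ico_eq_empty (by omega), sum_empty, sub_zero,
          hN q hq n h]
  · change w n q ≠ 0 at hq
    by_cases hqE : q ∈ E
    · exact hqE n
    · simp only [w, if_neg hqE] at hq
      obtain ⟨m, hm, hYm⟩ := exists_ne_zero_of_sum_ne_zero hq
      exact pow_dvd_add_of_le hT (mem_Ico.mp hm).1 (hY m q hYm)

end Telescoping

section Twisting

variable {p : ℕ} {a b : ℕ → ℤ} {c e : ℕ → k}

/-- The exponent of the monomial `τₙ` with `tᵇⁿ τₙ₊₁ = τₙ tᵃⁿ`. -/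
def twistExp (a b : ℕ → ℤ) (n : ℕ) : ℤ := ∑ m ∈ range n, (a m - b m)

theorem twistExp_succ (a b : ℕ → ℤ) (n : ℕ) :
    twistExp a b (n + 1) = twistExp a b n + (a n - b n) :=
  sum_range_succ _ _

theorem twistExp_neg (a b : ℕ → ℤ) (n : ℕ) : twistExp (-a) (-b) n = -twistExp a b n := by
  rw [twistExp, twistExp, ← sum_neg_distrib]
  exact sum_congr rfl fun m _ => by rw [Pi.neg_apply, Pi.neg_apply, neg_sub_neg, neg_sub]

/-- With `τₙ = κₙ t^{twistExp a b n}` satisfying `eₙ tᵇⁿ τₙ₊₁ = τₙ cₙ tᵃⁿ`, the substitution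
`vₙ = τₙ Wₙ` turns the equation into `Wₙ - Wₙ₊₁ = (τₙ cₙ tᵃⁿ)⁻¹ Rₙ`. -/
theorem exists_mul_single_sub_single_mul_eq (hp : 1 < p) (ha : ∀ n, (p : ℤ) ^ n ∣ a n)
    (hb : ∀ n, (p : ℤ) ^ n ∣ b n) (hc : ∀ n, c n ≠ 0) (he : ∀ n, e n ≠ 0) (R : ℕ → k⸨X⸩)
    (hR : ∀ n, R n ∈ levelSubring k (p ^ n))
    (hneg : ∀ n q, q < 0 → (∃ l, ¬ (p : ℤ) ^ l ∣ q + twistExp a b l) →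
      (R n).coeff (q + (twistExp a b n + a n)) = 0) :
    ∃ v : ℕ → k⸨X⸩, ∀ n, v n ∈ levelSubring k (p ^ n) ∧
      v n * single (a n) (c n) - single (b n) (e n) * v (n + 1) = R n := by
  set T := twistExp a b
  have hTsucc : ∀ n, T (n + 1) = T n + (a n - b n) := twistExp_succ a b
  set κ : ℕ → k := fun n => ∏ m ∈ range n, c m / e m
  have hκ : ∀ n, κ n * c n ≠ 0 := fun n =>
    mul_ne_zero (prod_ne_zero_iff.mpr fun m _ => div_ne_zero (hc m) (he m)) (hc n)
  have hτ : ∀ n, single (b n) (e n) * single (T (n + 1)) (κ (n + 1)) =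
      single (T n) (κ n) * single (a n) (c n) := fun n => by
    rw [single_mul_single, single_mul_single, hTsucc, show κ (n + 1) = κ n * (c n / e n) from
      prod_range_succ _ _, show b n + (T n + (a n - b n)) = T n + a n by ring,
      mul_left_comm, mul_div_cancel₀ _ (he n)]
  have hT : ∀ n, (p : ℤ) ^ n ∣ T (n + 1) - T n := fun n => by
    rw [hTsucc, add_sub_cancel_left]
    exact dvd_sub (ha n) (hb n)
  set Y := fun n => single (-(T n + a n)) (κ n * c n)⁻¹ * R n
  have hYcoeff : ∀ n q, (Y n).coeff q = (κ n * c n)⁻¹ * (R n).coeff (q + (T n + a n)) :=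
    fun n q => by rw [coeff_single_mul, sub_neg_eq_add]
  have hYR : ∀ n, single (T n) (κ n) * single (a n) (c n) * Y n = R n := fun n => by
    rw [single_mul_single, ← mul_assoc, single_mul_single, add_neg_cancel,
      mul_inv_cancel₀ (hκ n), single_zero_one, one_mul]
  obtain ⟨W, hW⟩ := exists_sub_succ_eq hp hT Y
    (fun n q hq => by
      rw [mem_support, hYcoeff] at hq
      have := hR n _ (right_ne_zero_of_mul hq)
      rwa [← add_assoc, dvd_add_left (ha n)] at this)
    (fun n q hq hq' => by rw [hYcoeff, hneg n q hq hq', mul_zero])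
  refine ⟨fun n => single (T n) (κ n) * W n, fun n => ⟨fun m hm => ?_, ?_⟩⟩
  · rw [mem_support, coeff_single_mul] at hm
    simpa using (hW n).2 _ (right_ne_zero_of_mul hm)
  · rw [← hYR, ← (hW n).1]
    linear_combination (-W (n + 1)) * hτ n

theorem finite_setOf_coeff_ne_zero_lt (x : k⸨X⸩) (β : ℤ) :
    {m | x.coeff m ≠ 0 ∧ m < β}.Finite :=
  (Set.finite_Ico x.order β).subset fun _ hm => ⟨order_le_of_coeff_ne_zero hm.1, hm.2⟩

theorem exists_finite_support_coeff_eq (X X' : k⸨X⸩) (s : ℤ) (E : Set ℤ) :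
    ∃ z : k⸨X⸩, z.support.Finite ∧ (∀ m ∈ z.support, m ∈ X.support ∨ -m ∈ X'.support) ∧
      (∀ m < s, m - s ∉ E → z.coeff m = X.coeff m) ∧
      ∀ m, s < m → m - s ∉ E → z.coeff m = X'.coeff (-m) := by
  classical
  let f : ℤ → k := fun m => if m - s ∈ E then 0 else if m < s then X.coeff m
    else if s < m then X'.coeff (-m) else 0
  have hf : ∀ m, f m ≠ 0 → X.coeff m ≠ 0 ∧ m < s ∨ X'.coeff (-m) ≠ 0 ∧ -m < -s := fun m hm => by
    simp only [f] at hm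
    split_ifs at hm with h₁ h₂ h₃
    · exact absurd rfl hm
    · exact Or.inl ⟨hm, h₂⟩
    · exact Or.inr ⟨hm, neg_lt_neg h₃⟩
    · exact absurd rfl hm
  have hfin : (Function.support f).Finite :=
    ((finite_setOf_coeff_ne_zero_lt X s).union
      ((finite_setOf_coeff_ne_zero_lt X' (-s)).preimage neg_injective.injOn)).subset hf
  refine ⟨⟨f, hfin.isPWO⟩, hfin, fun m hm => (hf m hm).imp And.left And.left,
    fun m hm hmE => ?_, fun m hm hmE => ?_⟩
  · simp [f, hmE, hm]
  · simp [f, hmE, hm, hm.not_gt]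

theorem exists_coeff_eq_coeff_neg (z : k⸨X⸩) (hz : z.support.Finite) :
    ∃ z' : k⸨X⸩, ∀ m, z'.coeff m = z.coeff (-m) :=
  ⟨⟨fun m => z.coeff (-m), (hz.preimage neg_injective.injOn).isPWO⟩, fun _ => rfl⟩

/-- `zₙ` collects the coefficients of `Xₙ`, and the reflected ones of `X'ₙ`, sitting at negative
non-exceptional exponents of the twisted picture, so that both `Xₙ - zₙ` and `X'ₙ - z'ₙ` meet
the hypothesis of `exists_mul_single_sub_single_mul_eq`. -/
theorem exists_laurentPolynomial_correction (hp : 1 < p) (ha : ∀ n, (p : ℤ) ^ n ∣ a n)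
    (hb : ∀ n, (p : ℤ) ^ n ∣ b n) (hc : ∀ n, c n ≠ 0) (he : ∀ n, e n ≠ 0) (X X' : ℕ → k⸨X⸩)
    (hX : ∀ n, X n ∈ levelSubring k (p ^ n)) (hX' : ∀ n, X' n ∈ levelSubring k (p ^ n)) :
    ∃ z z' v w : ℕ → k⸨X⸩, (∀ n, (z n).support.Finite) ∧
      (∀ n m, (z' n).coeff m = (z n).coeff (-m)) ∧
      (∀ n, v n ∈ levelSubring k (p ^ n)) ∧ (∀ n, w n ∈ levelSubring k (p ^ n)) ∧
      (∀ n, v n * single (a n) (c n) - single (b n) (e n) * v (n + 1) = X n - z n) ∧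
      ∀ n, w n * single (-a n) (c n) - single (-b n) (e n) * w (n + 1) = X' n - z' n := by
  set s : ℕ → ℤ := fun n => twistExp a b n + a n
  set E : Set ℤ := {q | ∀ l, (p : ℤ) ^ l ∣ q + twistExp a b l}
  choose z hzfin hzsupp hzX hzX' using
    fun n => exists_finite_support_coeff_eq (X n) (X' n) (s n) E
  choose z' hz' using fun n => exists_coeff_eq_coeff_neg (z n) (hzfin n)
  have hz : ∀ n, z n ∈ levelSubring k (p ^ n) := fun n m hm =>
    (hzsupp n m hm).elim (hX n m) fun h => dvd_neg.mp (hX' n _ h)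
  choose v hv using exists_mul_single_sub_single_mul_eq hp ha hb hc he (fun n => X n - z n)
    (fun n => sub_mem (hX n) (hz n)) fun n q hq ⟨l, hl⟩ => by
      change (X n - z n).coeff (q + s n) = 0
      rw [coeff_sub, hzX n _ (by linarith) (by rw [add_sub_cancel_right]; exact fun h => hl (h l)),
        sub_self]
  choose w hw using exists_mul_single_sub_single_mul_eq (a := -a) (b := -b) hp
    (fun n => (ha n).neg_right) (fun n => (hb n).neg_right) hc he (fun n => X' n - z' n)
    (fun n => sub_mem (hX' n) fun m hm => dvd_neg.mp (hz n _ (by rwa [mem_support, ← hz'])))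
    fun n q hq hqE => by
      simp only [twistExp_neg] at hqE ⊢
      obtain ⟨l, hl⟩ := hqE
      have hqE : s n - q - s n ∉ E := fun h => hl (by
        rw [sub_sub_cancel_left] at h
        rw [show q + -twistExp a b l = -(-q + twistExp a b l) by ring]
        exact (h l).neg_right)
      rw [show q + (-twistExp a b n + (-a) n) = q - s n by simp only [s, Pi.neg_apply]; ring,
        coeff_sub, hz', neg_sub, hzX' n _ (by linarith) hqE, neg_sub, sub_self]
  exact ⟨z, z', v, w, hzfin, hz', fun n => (hv n).1, fun n => (hw n).1, fun n => (hv n).2,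
    fun n => (hw n).2⟩

end Twisting

end LaurentSeries

namespace Matrix

variable {R : Type*} [CommRing R] {m : Type*} [Fintype m]

theorem transvection_inv [DecidableEq m] {i j : m} (h : i ≠ j) (c : R) :
    (transvection i j c)⁻¹ = transvection i j (-c) :=
  inv_eq_left_inv <| by
    rw [transvection_mul_transvection_same i j h, neg_add_cancel, transvection_zero]

variable [LinearOrder m]

theorem IsUpperTriangular.mul_apply_self {A B : Matrix m m R} (hA : A.IsUpperTriangular)
    (hB : B.IsUpperTriangular) (i : m) : (A * B) i i = A i i * B i i := by
  rw [mul_apply, sum_eq_single i (fun l _ hl => ?_) (by simp)]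
  rcases lt_or_gt_of_ne hl with h | h
  · rw [hA h, zero_mul]
  · rw [hB h, mul_zero]

theorem IsUpperTriangular.transvection_mul_mul_transvection_apply {N : Matrix m m R}
    (hN : N.IsUpperTriangular) {i j : m} (hij : i < j) (x y : R) (a b : m) :
    (transvection i j (-x) * N * transvection i j y) a b =
      N a b + (if b = j then N a i * y else 0) - (if a = i then x * N j b else 0) := by
  simp only [transvection, add_mul, mul_add, one_mul, mul_one, single_mul_mul_single, hN hij,
    mul_zero, zero_mul, single_zero, add_zero, add_apply]
  by_cases hb : b = j <;> by_cases ha : a = i <;>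
    simp [ha, hb, single_mul_apply_of_ne, mul_single_apply_of_ne] <;> ring

theorem IsUpperTriangular.transvection_mul_mul_transvection_apply_of_not_le {N : Matrix m m R}
    (hN : N.IsUpperTriangular) {i j : m} (hij : i < j) (x y : R) {a b : m}
    (h : ¬(a ≤ i ∧ j ≤ b)) : (transvection i j (-x) * N * transvection i j y) a b = N a b := by
  rw [hN.transvection_mul_mul_transvection_apply hij]
  have h₁ : b = j → N a i = 0 := fun hb => hN (lt_of_not_ge fun ha => h ⟨ha, hb.ge⟩)
  have h₂ : a = i → N j b = 0 := fun ha => hN (lt_of_not_ge fun hb => h ⟨ha.le, hb⟩)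
  split_ifs with hb ha ha
  · exact absurd ⟨ha.le, hb.ge⟩ h
  · rw [h₁ hb, zero_mul, sub_zero, add_zero]
  · rw [h₂ ha, mul_zero, add_zero, sub_zero]
  · rw [add_zero, sub_zero]

end Matrix

open Matrix LaurentSeries

section Gauge

variable {k : Type*} [Field k] {p r n : ℕ}

namespace MemBrLaurentSeriesPow

variable {A B : Matrix (Fin r) (Fin r) k⸨X⸩}

theorem isUpperTriangular (hA : MemBrLaurentSeriesPow k p n r A) : A.IsUpperTriangular :=
  fun i j h => hA.1 i j h

theorem mem_levelSubring (hA : MemBrLaurentSeriesPow k p n r A) (i j : Fin r) :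
    A i j ∈ levelSubring k (p ^ n) :=
  hA.2.1 i j

theorem isUnit_det (hA : MemBrLaurentSeriesPow k p n r A) : IsUnit A.det := by
  rw [det_of_isUpperTriangular hA.isUpperTriangular]
  exact isUnit_iff_ne_zero.mpr (Finset.prod_ne_zero_iff.mpr fun i _ => hA.2.2 i)

theorem mul (hA : MemBrLaurentSeriesPow k p n r A) (hB : MemBrLaurentSeriesPow k p n r B) :
    MemBrLaurentSeriesPow k p n r (A * B) :=
  ⟨fun i j h => hA.isUpperTriangular.mul hB.isUpperTriangular h,
    fun i j => Subring.sum_mem _ fun l _ =>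
      mul_mem (hA.mem_levelSubring i l) (hB.mem_levelSubring l j),
    fun i => by
      rw [hA.isUpperTriangular.mul_apply_self hB.isUpperTriangular]
      exact mul_ne_zero (hA.2.2 i) (hB.2.2 i)⟩

theorem of_succ (hA : MemBrLaurentSeriesPow k p (n + 1) r A) : MemBrLaurentSeriesPow k p n r A :=
  ⟨hA.1, fun i j => levelSubring_mono (pow_dvd_pow _ n.le_succ) (hA.mem_levelSubring i j), hA.2.2⟩

end MemBrLaurentSeriesPow

theorem memBrLaurentSeriesPow_diagonal {d : Fin r → k⸨X⸩} (hd : ∀ i, d i ≠ 0)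
    (hlev : ∀ i, d i ∈ levelSubring k (p ^ n)) : MemBrLaurentSeriesPow k p n r (diagonal d) :=
  ⟨fun i j h => blockTriangular_diagonal d h, fun i j => by
    change diagonal d i j ∈ levelSubring k _
    rw [diagonal_apply]
    split_ifs
    exacts [hlev i, zero_mem _], fun i => by rw [diagonal_apply_eq]; exact hd i⟩

theorem memBrLaurentSeriesPow_transvection {i j : Fin r} (hij : i < j) {c : k⸨X⸩}
    (hc : c ∈ levelSubring k (p ^ n)) : MemBrLaurentSeriesPow k p n r (transvection i j c) :=
  ⟨fun a b h => blockTriangular_transvection (b := id) hij.le c h, fun a b => by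
    change (1 + single i j c) a b ∈ levelSubring k _
    rw [Matrix.add_apply, one_apply, single_apply]
    refine add_mem ?_ ?_ <;> split_ifs
    exacts [one_mem _, zero_mem _, hc, zero_mem _], fun a => by
    rw [transvection, Matrix.add_apply, one_apply_eq, single_apply,
      if_neg fun h => hij.ne (h.1.trans h.2.symm), add_zero]
    exact one_ne_zero⟩

def GaugeEquiv (k : Type*) [Field k] (p : ℕ) {r : ℕ} (M A : ℕ → Matrix (Fin r) (Fin r) k⸨X⸩) :
    Prop :=
  ∃ g : ℕ → Matrix (Fin r) (Fin r) k⸨X⸩, (∀ n, MemBrLaurentSeriesPow k p n r (g n)) ∧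
    ∀ n, M n = g n * A n * (g (n + 1))⁻¹

namespace GaugeEquiv

variable {M N A : ℕ → Matrix (Fin r) (Fin r) k⸨X⸩}

theorem refl (M : ℕ → Matrix (Fin r) (Fin r) k⸨X⸩) : GaugeEquiv k p M M :=
  ⟨fun _ => 1, fun n => by
    simpa using memBrLaurentSeriesPow_diagonal (d := fun _ => 1) (fun _ => one_ne_zero)
      fun _ => one_mem _, fun n => by simp⟩

theorem trans (h₁ : GaugeEquiv k p M N) (h₂ : GaugeEquiv k p N A) : GaugeEquiv k p M A := by
  obtain ⟨g, hg, hMN⟩ := h₁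
  obtain ⟨g', hg', hNA⟩ := h₂
  exact ⟨g * g', fun n => (hg n).mul (hg' n), fun n => by
    rw [hMN, hNA, Pi.mul_apply, Pi.mul_apply, Matrix.mul_inv_rev]
    simp only [Matrix.mul_assoc]⟩

theorem of_inv_mul_mul {g : ℕ → Matrix (Fin r) (Fin r) k⸨X⸩}
    (hg : ∀ n, MemBrLaurentSeriesPow k p n r (g n)) :
    GaugeEquiv k p M fun n => (g n)⁻¹ * M n * g (n + 1) :=
  ⟨g, hg, fun n => by
    rw [Matrix.mul_assoc, Matrix.mul_assoc, mul_nonsing_inv _ (hg (n + 1)).isUnit_det,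
      Matrix.mul_one, ← Matrix.mul_assoc, mul_nonsing_inv _ (hg n).isUnit_det, Matrix.one_mul]⟩

end GaugeEquiv

end Gauge

section NormalForm

variable {k : Type*} [Field k] {p r : ℕ}

def HasMonomialDiagonal (p : ℕ) (b : ℕ → Fin r → ℤ) (c : ℕ → Fin r → k)
    (N : ℕ → Matrix (Fin r) (Fin r) k⸨X⸩) : Prop :=
  ∀ n, MemBrLaurentSeriesPow k p n r (N n) ∧ ∀ i, N n i i = single (b n i) (c n i)

/-- `Kₙ i j = ι(Nₙ i j)`, for a Laurent polynomial `Nₙ i j`. -/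
def IsReflectedAt (N K : ℕ → Matrix (Fin r) (Fin r) k⸨X⸩) (i j : Fin r) : Prop :=
  ∀ n, (N n i j).support.Finite ∧ ∀ m, (K n i j).coeff m = (N n i j).coeff (-m)

variable {b : ℕ → Fin r → ℤ} {c : ℕ → Fin r → k} {N K : ℕ → Matrix (Fin r) (Fin r) k⸨X⸩}

theorem HasMonomialDiagonal.isReflectedAt_of_not_lt (hN : HasMonomialDiagonal p b c N)
    (hK : HasMonomialDiagonal p (-b) c K) {i j : Fin r} (hij : ¬ i < j) :
    IsReflectedAt N K i j := by
  intro n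
  rcases (not_lt.mp hij).lt_or_eq with h | rfl
  · rw [(hN n).1.isUpperTriangular h, (hK n).1.isUpperTriangular h]
    simp
  · rw [(hN n).2, (hK n).2]
    refine ⟨(Set.finite_singleton _).subset support_single_subset, fun m => ?_⟩
    simp [coeff_single, neg_eq_iff_eq_neg]

theorem HasMonomialDiagonal.exists_transvection_step (hp : 1 < p)
    (hb : ∀ n i, (p : ℤ) ^ n ∣ b n i) (hc : ∀ n i, c n i ≠ 0) (hN : HasMonomialDiagonal p b c N)
    (hK : HasMonomialDiagonal p (-b) c K) {i j : Fin r} (hij : i < j) :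
    ∃ N₂ K₂, GaugeEquiv k p N N₂ ∧ GaugeEquiv k p K₂ K ∧ HasMonomialDiagonal p b c N₂ ∧
      HasMonomialDiagonal p (-b) c K₂ ∧
      (∀ n a b', ¬(a ≤ i ∧ j ≤ b') → N₂ n a b' = N n a b' ∧ K₂ n a b' = K n a b') ∧
      IsReflectedAt N₂ K₂ i j := by
  obtain ⟨z, z', v, w, hz, hz', hv, hw, hveq, hweq⟩ := exists_laurentPolynomial_correction hp
    (fun n => hb n j) (fun n => hb n i) (fun n => hc n j) (fun n => hc n i) (fun n => N n i j)
    (fun n => K n i j) (fun n => (hN n).1.mem_levelSubring i j)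
    (fun n => (hK n).1.mem_levelSubring i j)
  set N₂ := fun n => (transvection i j (v n))⁻¹ * N n * transvection i j (v (n + 1))
  set K₂ := fun n => transvection i j (-w n) * K n * (transvection i j (-w (n + 1)))⁻¹
  have hN₂ : ∀ n, N₂ n = transvection i j (-v n) * N n * transvection i j (v (n + 1)) :=
    fun n => by simp only [N₂, transvection_inv hij.ne]
  have hK₂ : ∀ n, K₂ n = transvection i j (-w n) * K n * transvection i j (w (n + 1)) :=
    fun n => by simp only [K₂, transvection_inv hij.ne, neg_neg]
  have hT : ∀ {n} {x : k⸨X⸩}, x ∈ levelSubring k (p ^ n) →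
      MemBrLaurentSeriesPow k p n r (transvection i j x) :=
    memBrLaurentSeriesPow_transvection hij
  have hsucc : ∀ {n} {x : k⸨X⸩}, x ∈ levelSubring k (p ^ (n + 1)) → x ∈ levelSubring k (p ^ n) :=
    fun {n} _ hx => levelSubring_mono (pow_dvd_pow _ n.le_succ) hx
  have hsame : ∀ n a b', ¬(a ≤ i ∧ j ≤ b') → N₂ n a b' = N n a b' ∧ K₂ n a b' = K n a b' :=
    fun n a b' h => by
      rw [hN₂, hK₂]
      exact ⟨(hN n).1.isUpperTriangular.transvection_mul_mul_transvection_apply_of_not_le hij _ _ h,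
        (hK n).1.isUpperTriangular.transvection_mul_mul_transvection_apply_of_not_le hij _ _ h⟩
  have hdiag : ∀ a : Fin r, ¬(a ≤ i ∧ j ≤ a) := fun a h => (h.1.trans_lt hij).not_ge h.2
  refine ⟨N₂, K₂, GaugeEquiv.of_inv_mul_mul fun n => hT (hv n),
    ⟨fun n => transvection i j (-w n), fun n => hT (neg_mem (hw n)), fun n => rfl⟩,
    fun n => ⟨?_, fun a => (hsame n a a (hdiag a)).1.trans ((hN n).2 a)⟩,
    fun n => ⟨?_, fun a => (hsame n a a (hdiag a)).2.trans ((hK n).2 a)⟩, hsame, fun n => ?_⟩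
  · rw [hN₂]
    exact ((hT (neg_mem (hv n))).mul (hN n).1).mul (hT (hsucc (hv (n + 1))))
  · rw [hK₂]
    exact ((hT (neg_mem (hw n))).mul (hK n).1).mul (hT (hsucc (hw (n + 1))))
  · have hN₂z : N₂ n i j = z n := by
      rw [hN₂, (hN n).1.isUpperTriangular.transvection_mul_mul_transvection_apply hij,
        if_pos rfl, if_pos rfl, (hN n).2, (hN n).2]
      linear_combination -hveq n
    have hK₂z' : K₂ n i j = z' n := by
      rw [hK₂, (hK n).1.isUpperTriangular.transvection_mul_mul_transvection_apply hij,
        if_pos rfl, if_pos rfl, (hK n).2, (hK n).2]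
      linear_combination -hweq n
    rw [hN₂z, hK₂z']
    exact ⟨hz n, hz' n⟩

/-- Entries are treated in order of increasing `j - i`: a step at `(i, j)` only disturbs
entries farther from the diagonal. -/
theorem HasMonomialDiagonal.exists_reflected_normal_form (hp : 1 < p)
    (hb : ∀ n i, (p : ℤ) ^ n ∣ b n i) (hc : ∀ n i, c n i ≠ 0) (hN : HasMonomialDiagonal p b c N) :
    ∃ A A', GaugeEquiv k p N A ∧
      GaugeEquiv k p A' (fun n => diagonal fun i => single (-b n i) (c n i)) ∧
      HasMonomialDiagonal p b c A ∧ ∀ i j, IsReflectedAt A A' i j := by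
  classical
  suffices ∀ S : Finset (Fin r × Fin r), ∃ A A', GaugeEquiv k p N A ∧
      GaugeEquiv k p A' (fun n => diagonal fun i => single (-b n i) (c n i)) ∧
      HasMonomialDiagonal p b c A ∧ HasMonomialDiagonal p (-b) c A' ∧
      ∀ x ∈ S, IsReflectedAt A A' x.1 x.2 by
    obtain ⟨A, A', hNA, hA'D, hA, -, hS⟩ := this Finset.univ
    exact ⟨A, A', hNA, hA'D, hA, fun i j => hS (i, j) (Finset.mem_univ _)⟩
  intro S
  induction S using Finset.induction_on_max_value (fun x : Fin r × Fin r => (x.2 : ℕ) - x.1) with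
  | empty =>
    refine ⟨N, fun n => diagonal fun i => single (-b n i) (c n i), .refl _, .refl _, hN,
      fun n => ⟨memBrLaurentSeriesPow_diagonal (fun i => single_ne_zero (hc n i))
        fun i => single_mem_levelSubring (hb n i).neg_right _, fun i => diagonal_apply_eq _ _⟩,
      by simp⟩
  | insert x S hxS hmax ih =>
    obtain ⟨A, A', hNA, hA'D, hA, hA', hS⟩ := ih
    by_cases hx : x.1 < x.2
    · obtain ⟨A₂, A₂', hAA₂, hA₂'A', hA₂, hA₂', hsame, hxA⟩ :=
        hA.exists_transvection_step hp hb hc hA' hx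
      refine ⟨A₂, A₂', hNA.trans hAA₂, hA₂'A'.trans hA'D, hA₂, hA₂', fun y hy => ?_⟩
      rcases Finset.mem_insert.mp hy with rfl | hy
      · exact hxA
      · have hyx : y ≠ x := fun h => hxS (h ▸ hy)
        have hfar : ¬(y.1 ≤ x.1 ∧ x.2 ≤ y.2) := fun h => by
          have := hmax y hy
          refine hyx (Prod.ext (Fin.ext ?_) (Fin.ext ?_)) <;>
            simp only [Fin.le_def] at h <;> omega
        intro n
        rw [(hsame n _ _ hfar).1, (hsame n _ _ hfar).2]
        exact hS y hy n
    · refine ⟨A, A', hNA, hA'D, hA, hA', fun y hy => ?_⟩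
      rcases Finset.mem_insert.mp hy with rfl | hy
      · exact hA.isReflectedAt_of_not_lt hA' hx
      · exact hS y hy

theorem HasMonomialDiagonal.memBrLaurentPolyPow (hA : HasMonomialDiagonal p b c N)
    (hb : ∀ n i, (p : ℤ) ^ n ∣ b n i) (hc : ∀ n i, c n i ≠ 0)
    (hfin : ∀ n i j, (N n i j).support.Finite) (n : ℕ) : MemBrLaurentPolyPow k p n r (N n) :=
  ⟨(hA n).1.1, fun i j => ⟨hfin n i j, (hA n).1.2.1 i j⟩, fun i =>
    ⟨single (-b n i) (c n i)⁻¹, (Set.finite_singleton _).subset support_single_subset,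
      single_mem_levelSubring (hb n i).neg_right _, by
        rw [(hA n).2, single_mul_single, add_neg_cancel, mul_inv_cancel₀ (hc n i),
          single_zero_one]⟩⟩

theorem exists_hasMonomialDiagonal (hp : 1 < p) {M : ℕ → Matrix (Fin r) (Fin r) k⸨X⸩}
    (hM : ∀ n, MemBrLaurentSeriesPow k p n r (M n)) :
    ∃ (N : ℕ → Matrix (Fin r) (Fin r) k⸨X⸩) (b : ℕ → Fin r → ℤ) (c : ℕ → Fin r → k),
      (∀ n i, (p : ℤ) ^ n ∣ b n i) ∧ (∀ n i, c n i ≠ 0) ∧ GaugeEquiv k p M N ∧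
      HasMonomialDiagonal p b c N := by
  choose γ b c hγ using fun i => exists_gauge_eq_single hp (fun n => M n i i)
    (fun n => (hM n).2.2 i) fun n => (hM n).mem_levelSubring i i
  set g := fun n => diagonal fun i => γ i n
  have hg : ∀ n, MemBrLaurentSeriesPow k p n r (g n) := fun n =>
    memBrLaurentSeriesPow_diagonal (fun i => (hγ i n).1) fun i => (hγ i n).2.1
  have hginv : ∀ n, (g n)⁻¹ = diagonal fun i => (γ i n)⁻¹ := fun n =>
    inv_eq_left_inv (by rw [diagonal_mul_diagonal]; simp [inv_mul_cancel₀ (hγ _ n).1])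
  refine ⟨fun n => (g n)⁻¹ * M n * g (n + 1), fun n i => b i n, fun n i => c i n,
    fun n i => (hγ i n).2.2.1, fun n i => (hγ i n).2.2.2.1, GaugeEquiv.of_inv_mul_mul hg,
    fun n => ⟨?_, fun i => ?_⟩⟩
  · dsimp only
    rw [hginv]
    exact ((memBrLaurentSeriesPow_diagonal (fun i => inv_ne_zero (hγ i n).1) fun i =>
      inv_mem_levelSubring (pow_pos (by exact_mod_cast hp.trans_le' zero_le_one) n)
        (hγ i n).2.1).mul (hM n)).mul (hg (n + 1)).of_succ
  · dsimp only
    rw [hginv, mul_diagonal, diagonal_mul, mul_assoc, (hγ i n).2.2.2.2,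
      inv_mul_cancel_left₀ (hγ i n).1]

end NormalForm

theorem stratified_bundle_extension_special_general
    (k : Type*) [Field k] (p : ℕ) [CharP k p] (hp : 0 < p)
    (r : ℕ)
    (M : ℕ → Matrix (Fin r) (Fin r) (LaurentSeries k))
    (hM : ∀ n, MemBrLaurentSeriesPow k p n r (M n)) :
    ∃ A A' : ℕ → Matrix (Fin r) (Fin r) (LaurentSeries k),
      (∀ n, MemBrLaurentPolyPow k p n r (A n)) ∧
      IsRevMatSeq k r A A' ∧
      -- (i) over `k((t))`, `A` is equivalent to `M`
      (∃ g : ℕ → Matrix (Fin r) (Fin r) (LaurentSeries k),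
        (∀ n, MemBrLaurentSeriesPow k p n r (g n)) ∧
        ∀ n, M n = g n * A n * (g (n + 1))⁻¹) ∧
      -- (ii) over `k((s))`, `ι(A)` is equivalent to a diagonal sequence
      (∃ (h : ℕ → Matrix (Fin r) (Fin r) (LaurentSeries k))
         (d : ℕ → Fin r → LaurentSeries k),
        (∀ n, MemBrLaurentSeriesPow k p n r (h n)) ∧
        (∀ n (i : Fin r), d n i ≠ 0 ∧ ∀ m ∈ (d n i).support, ((p : ℤ) ^ n) ∣ m) ∧
        ∀ n, A' n = h n * Matrix.diagonal (d n) * (h (n + 1))⁻¹) := by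
  have : NeZero p := ⟨hp.ne'⟩
  have hp₁ : 1 < p := (CharP.char_is_prime_of_pos k p).out.one_lt
  obtain ⟨N, b, c, hb, hc, hMN, hN⟩ := exists_hasMonomialDiagonal hp₁ hM
  obtain ⟨A, A', hNA, ⟨h, hh, hA'⟩, hA, hrefl⟩ := hN.exists_reflected_normal_form hp₁ hb hc
  exact ⟨A, A', hA.memBrLaurentPolyPow hb hc fun n i j => (hrefl i j n).1,
    fun n i j m => (hrefl i j n).2 m, hMN.trans hNA,
    h, fun n i => single (-b n i) (c n i), hh,
    fun n i => ⟨single_ne_zero (hc n i), single_mem_levelSubring (hb n i).neg_right _⟩, hA'⟩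

/-- **Key surjectivity statement (Proposition 5.7).**
Every stratified bundle on `k((t))`, presented by a sequence `Mₙ ∈ B_r(k((t))^{pⁿ})`,
extends to a stratified bundle on `𝔾ₘ`, presented by `Aₙ ∈ B_r(k[t,t⁻¹]^{pⁿ})`, which
over `k((t⁻¹)) = k((s))` is a direct sum of rank-one objects: `ι(Aₙ)` is equivalent,
via `hₙ ∈ B_r(k((s))^{pⁿ})`, to a sequence of invertible diagonal matrices `Δₙ` with
entries in `k((s))^{pⁿ}`. -/
theorem stratified_bundle_extension_special
    (k : Type*) [Field k] [IsAlgClosed k] (p : ℕ) [CharP k p] (hp : 0 < p)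
    (r : ℕ) (hr : 1 ≤ r)
    (M : ℕ → Matrix (Fin r) (Fin r) (LaurentSeries k))
    (hM : ∀ n, MemBrLaurentSeriesPow k p n r (M n)) :
    ∃ A A' : ℕ → Matrix (Fin r) (Fin r) (LaurentSeries k),
      (∀ n, MemBrLaurentPolyPow k p n r (A n)) ∧
      IsRevMatSeq k r A A' ∧
      -- (i) over `k((t))`, `A` is equivalent to `M`
      (∃ g : ℕ → Matrix (Fin r) (Fin r) (LaurentSeries k),
        (∀ n, MemBrLaurentSeriesPow k p n r (g n)) ∧
        ∀ n, M n = g n * A n * (g (n + 1))⁻¹) ∧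
      -- (ii) over `k((s))`, `ι(A)` is equivalent to a diagonal sequence
      (∃ (h : ℕ → Matrix (Fin r) (Fin r) (LaurentSeries k))
         (d : ℕ → Fin r → LaurentSeries k),
        (∀ n, MemBrLaurentSeriesPow k p n r (h n)) ∧
        (∀ n (i : Fin r), d n i ≠ 0 ∧ ∀ m ∈ (d n i).support, ((p : ℤ) ^ n) ∣ m) ∧
        ∀ n, A' n = h n * Matrix.diagonal (d n) * (h (n + 1))⁻¹) :=
  stratified_bundle_extension_special_general k p hp r M hM
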